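/- arXiv:2012.04590 — 2 statements merged into one kernel-verified Lean document; each statement's English description precedes it below -/
import Mathlib

section
/- Let S⁺, S⁻ ⊆ ℤⁿ be finite nonempty sets, put Δ⁺ := convexHull ℝ S⁺ and Δ⁻ := convexHull ℝ S⁻, and assume Δ⁺ ⊆ Δ⁻. Then for every connected component C of Δ⁻ \ Δ⁺ there exists a finite set S ⊆ ℤⁿ such that C ∪ Δ⁺ = convexHull ℝ S. In other words, the union of Δ⁺ with any connected component of Δ⁻ \ Δ⁺ is again a lattice polytope. -/
/-- The canonical inclusion of the standard lattice `ℤⁿ` into `ℝⁿ`. -/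
def intVec {n : ℕ} (v : Fin n → ℤ) : Fin n → ℝ := fun i => (v i : ℝ)

/-!
Write `K = C ∪ Δ⁺`. It is convex: if a point `p` of a segment `[a, b]` with ends in `K` is not
in `Δ⁺`, then by convexity of `Δ⁺` one of the halves `[a, p]`, `[p, b]` misses `Δ⁺`, and that half
joins `p` to `C` inside `Δ⁻ \ Δ⁺`. It is compact, because a component is closed in
`Δ⁻ \ Δ⁺`. An extreme point of `K` lying in `C` has a convex neighbourhood in `Δ⁻` that misses
`Δ⁺`, hence lies in `C`; as extremality is a local property, it is an extreme point of `Δ⁻`.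
So every extreme point of `K` is a vertex of `Δ⁺` or `Δ⁻`, a lattice point, and by Krein–Milman
`K` is the convex hull of these finitely many points.
-/

open Set Topology

section Components

variable {α : Type*} [TopologicalSpace α] {s F : Set α} {x y : α}

theorem IsPreconnected.subset_connectedComponentIn_of_mem (hs : IsPreconnected s)
    (hsF : s ⊆ F) (hys : y ∈ s) (hyx : y ∈ _root_.connectedComponentIn F x) :
    s ⊆ _root_.connectedComponentIn F x :=
  (hs.subset_connectedComponentIn hys hsF).trans (connectedComponentIn_eq hyx).symm.subset

theorem closure_connectedComponentIn_inter_subset :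
    closure (connectedComponentIn F x) ∩ F ⊆ connectedComponentIn F x := by
  rintro y ⟨hy, hyF⟩
  obtain ⟨c, hc⟩ := closure_nonempty_iff.mp ⟨y, hy⟩
  have hpre : IsPreconnected (insert y (connectedComponentIn F x)) :=
    isPreconnected_connectedComponentIn.subset_closure (subset_insert _ _)
      (insert_subset hy subset_closure)
  exact hpre.subset_connectedComponentIn_of_mem
    (insert_subset hyF (connectedComponentIn_subset _ _)) (mem_insert_of_mem _ hc) hc
    (mem_insert _ _)

theorem IsClosed.union_connectedComponentIn_diff {M P : Set α} (hM : IsClosed M) (hP : IsClosed P) :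
    IsClosed (connectedComponentIn (M \ P) x ∪ P) := by
  refine isClosed_of_closure_subset fun y hy => ?_
  rw [closure_union, hP.closure_eq] at hy
  by_cases hyP : y ∈ P
  · exact Or.inr hyP
  have hyC := hy.resolve_right hyP
  have hyM : y ∈ M :=
    hM.closure_subset_iff.mpr (fun _ hz => (connectedComponentIn_subset _ _ hz).1) hyC
  exact Or.inl (closure_connectedComponentIn_inter_subset ⟨hyC, hyM, hyP⟩)

end Components

theorem Convex.disjoint_segment_left_or_right {𝕜 E : Type*} [Field 𝕜] [LinearOrder 𝕜]
    [IsStrictOrderedRing 𝕜] [AddCommGroup E] [Module 𝕜 E] {P : Set E} (hP : Convex 𝕜 P)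
    {a b p : E} (hp : p ∈ segment 𝕜 a b) (hpP : p ∉ P) :
    Disjoint (segment 𝕜 a p) P ∨ Disjoint (segment 𝕜 p b) P := by
  rw [or_iff_not_imp_left, not_disjoint_iff, disjoint_left]
  rintro ⟨u, hu, huP⟩ w hw hwP
  rw [mem_segment_iff_wbtw] at hp hu hw
  exact hpP (hP.segment_subset huP hwP
    (mem_segment_iff_wbtw.mpr ((hp.trans_left_right hu).trans_right_left hw)))

section ComponentOfDifference

variable {E : Type*} [AddCommGroup E] [Module ℝ E] [TopologicalSpace E] {M P : Set E} {x : E}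

theorem segment_subset_connectedComponentIn_diff [IsTopologicalAddGroup E] [ContinuousSMul ℝ E]
    (hM : Convex ℝ M) {a b : E} (ha : a ∈ connectedComponentIn (M \ P) x) (hb : b ∈ M)
    (hab : Disjoint (segment ℝ a b) P) :
    segment ℝ a b ⊆ connectedComponentIn (M \ P) x :=
  (convex_segment a b).isPreconnected.subset_connectedComponentIn_of_mem
    (fun _ hz => ⟨hM.segment_subset (connectedComponentIn_subset _ _ ha).1 hb hz,
      hab.notMem_of_mem_left hz⟩)
    (left_mem_segment ℝ a b) ha

theorem Convex.union_connectedComponentIn_diff [IsTopologicalAddGroup E] [ContinuousSMul ℝ E]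
    (hM : Convex ℝ M) (hP : Convex ℝ P) (hPM : P ⊆ M) :
    Convex ℝ (connectedComponentIn (M \ P) x ∪ P) := by
  set C := connectedComponentIn (M \ P) x
  have hKM : C ∪ P ⊆ M := union_subset (fun _ hz => (connectedComponentIn_subset _ _ hz).1) hPM
  have key : ∀ a ∈ C ∪ P, ∀ p ∈ M, Disjoint (segment ℝ a p) P → p ∈ C := fun a ha p hp hap =>
    segment_subset_connectedComponentIn_diff hM
      (ha.resolve_right (hap.notMem_of_mem_left (left_mem_segment ℝ a p))) hp hap
      (right_mem_segment ℝ a p)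
  rw [convex_iff_segment_subset]
  intro a ha b hb p hp
  by_cases hpP : p ∈ P
  · exact Or.inr hpP
  have hpM : p ∈ M := hM.segment_subset (hKM ha) (hKM hb) hp
  rcases hP.disjoint_segment_left_or_right hp hpP with hap | hpb
  · exact Or.inl (key a ha p hpM hap)
  · exact Or.inl (key b hb p hpM (segment_symm ℝ p b ▸ hpb))

end ComponentOfDifference

section ExtremePoints

variable {E : Type*} [AddCommGroup E] [Module ℝ E] [TopologicalSpace E] [IsTopologicalAddGroup E]
  [ContinuousSMul ℝ E]

-- Shrink a segment through `v` by a homothety centred at `v` until its ends lie in `U`.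
theorem Convex.mem_extremePoints_of_mem_extremePoints_inter {A U : Set E} {v : E}
    (hA : Convex ℝ A) (hU : U ∈ 𝓝 v) (hv : v ∈ (A ∩ U).extremePoints ℝ) :
    v ∈ A.extremePoints ℝ := by
  have hvA : v ∈ A := hv.1.1
  have hnear (c : E) : ∀ᶠ t in 𝓝[>] (0 : ℝ), AffineMap.homothety v t c ∈ U := by
    have hcont : Continuous fun t : ℝ => AffineMap.homothety v t c := by
      simp only [AffineMap.homothety_apply, vsub_eq_sub, vadd_eq_add]
      fun_prop
    exact nhdsWithin_le_nhds (hcont.tendsto' 0 v (by simp) hU)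
  refine ⟨hvA, fun a ha b hb hvab => ?_⟩
  obtain ⟨t, ⟨hta, htb⟩, ht0, ht1⟩ :=
    ((hnear a).and (hnear b)).and (Ioc_mem_nhdsGT one_pos) |>.exists
  have hhA (c : E) (hc : c ∈ A) : AffineMap.homothety v t c ∈ A := by
    rw [AffineMap.homothety_eq_lineMap]
    exact hA.lineMap_mem hvA hc ⟨ht0.le, ht1⟩
  have hvh : v ∈ openSegment ℝ (AffineMap.homothety v t a) (AffineMap.homothety v t b) := by
    rw [← image_openSegment]
    exact ⟨v, hvab, AffineMap.homothety_apply_same v t⟩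
  have hav := hv.2 ⟨hhA a ha, hta⟩ ⟨hhA b hb, htb⟩ hvh
  exact AffineMap.homothety_injective v ht0.ne'
    (hav.trans (AffineMap.homothety_apply_same v t).symm)

theorem extremePoints_union_connectedComponentIn_diff_subset [LocallyConvexSpace ℝ E]
    {M P : Set E} {x : E} (hM : Convex ℝ M) (hP : IsClosed P) :
    (connectedComponentIn (M \ P) x ∪ P).extremePoints ℝ ⊆
      P.extremePoints ℝ ∪ M.extremePoints ℝ := by
  set C := connectedComponentIn (M \ P) x
  intro v hv
  rcases hv.1 with hvC | hvP
  · obtain ⟨U, ⟨hU, hUconv⟩, hUP⟩ :=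
      (LocallyConvexSpace.convex_basis (𝕜 := ℝ) v).mem_iff.mp (hP.isOpen_compl.mem_nhds
        (connectedComponentIn_subset _ _ hvC).2)
    have hvM : v ∈ M := (connectedComponentIn_subset _ _ hvC).1
    have hMUC : M ∩ U ⊆ C :=
      (hM.inter hUconv).isPreconnected.subset_connectedComponentIn_of_mem
        (fun _ hz => ⟨hz.1, hUP hz.2⟩) ⟨hvM, mem_of_mem_nhds hU⟩ hvC
    exact Or.inr (hM.mem_extremePoints_of_mem_extremePoints_inter hU
      (inter_extremePoints_subset_extremePoints_of_subset (hMUC.trans subset_union_left)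
        ⟨⟨hvM, mem_of_mem_nhds hU⟩, hv⟩))
  · exact Or.inl (inter_extremePoints_subset_extremePoints_of_subset subset_union_right ⟨hvP, hv⟩)

theorem IsCompact.eq_convexHull_inter_of_extremePoints_subset [T2Space E]
    [LocallyConvexSpace ℝ E] {K F : Set E} (hK : IsCompact K) (hKconv : Convex ℝ K)
    (hF : F.Finite) (hKF : K.extremePoints ℝ ⊆ F) : K = convexHull ℝ (F ∩ K) := by
  refine subset_antisymm ?_ (convexHull_min inter_subset_right hKconv)
  calc K = closure (convexHull ℝ (K.extremePoints ℝ)) :=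
        (closure_convexHull_extremePoints hK hKconv).symm
    _ ⊆ closure (convexHull ℝ (F ∩ K)) :=
        closure_mono (convexHull_mono (subset_inter hKF extremePoints_subset))
    _ = convexHull ℝ (F ∩ K) := ((hF.subset inter_subset_left).isClosed_convexHull ℝ).closure_eq

end ExtremePoints

theorem union_component_is_lattice_polytope_general {n : ℕ} (Sp Sm : Finset (Fin n → ℤ))
    (Δp Δm : Set (Fin n → ℝ))
    (hΔp : Δp = convexHull ℝ (intVec '' ↑Sp))
    (hΔm : Δm = convexHull ℝ (intVec '' ↑Sm))
    (hsub : Δp ⊆ Δm)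
    (x : Fin n → ℝ) :
    ∃ S : Finset (Fin n → ℤ),
      connectedComponentIn (Δm \ Δp) x ∪ Δp = convexHull ℝ (intVec '' ↑S) := by
  classical
  set K := connectedComponentIn (Δm \ Δp) x ∪ Δp
  have hPconv : Convex ℝ Δp := hΔp ▸ convex_convexHull ℝ _
  have hMconv : Convex ℝ Δm := hΔm ▸ convex_convexHull ℝ _
  have hPclosed : IsClosed Δp := hΔp ▸ (Sp.finite_toSet.image intVec).isClosed_convexHull ℝ
  have hMcompact : IsCompact Δm := hΔm ▸ (Sm.finite_toSet.image intVec).isCompact_convexHull ℝ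
  have hKconv : Convex ℝ K := hMconv.union_connectedComponentIn_diff hPconv hsub
  have hKcompact : IsCompact K :=
    hMcompact.of_isClosed_subset (hMcompact.isClosed.union_connectedComponentIn_diff hPclosed)
      (union_subset (fun _ hz => (connectedComponentIn_subset _ _ hz).1) hsub)
  have hext : K.extremePoints ℝ ⊆ intVec '' ↑(Sp ∪ Sm) := by
    refine (extremePoints_union_connectedComponentIn_diff_subset hMconv hPclosed).trans ?_
    rw [hΔp, hΔm, Finset.coe_union, image_union]
    exact union_subset_union extremePoints_convexHull_subset extremePoints_convexHull_subset
  refine ⟨(Sp ∪ Sm).filter (intVec · ∈ K), ?_⟩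
  have hS : ↑((Sp ∪ Sm).filter (intVec · ∈ K)) = ↑(Sp ∪ Sm) ∩ intVec ⁻¹' K := by
    ext; simp
  rw [hS, image_inter_preimage]
  exact hKcompact.eq_convexHull_inter_of_extremePoints_subset hKconv
    ((Sp ∪ Sm).finite_toSet.image intVec) hext

/-- Let `S⁺, S⁻ ⊆ ℤⁿ` be finite nonempty sets, put `Δ⁺ := convexHull ℝ S⁺` and
`Δ⁻ := convexHull ℝ S⁻`, and assume `Δ⁺ ⊆ Δ⁻`.  Then for every connected component `C` of
`Δ⁻ \ Δ⁺` there exists a finite set `S ⊆ ℤⁿ` such that `C ∪ Δ⁺ = convexHull ℝ S`, i.e.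
the union of `Δ⁺` with any connected component of `Δ⁻ \ Δ⁺` is again a lattice polytope.
(Compact case of Proposition 13 of the paper.) -/
theorem union_component_is_lattice_polytope {n : ℕ} (Sp Sm : Finset (Fin n → ℤ))
    (hSp : Sp.Nonempty) (hSm : Sm.Nonempty)
    (Δp Δm : Set (Fin n → ℝ))
    (hΔp : Δp = convexHull ℝ (intVec '' ↑Sp))
    (hΔm : Δm = convexHull ℝ (intVec '' ↑Sm))
    (hsub : Δp ⊆ Δm)
    (x : Fin n → ℝ) (hx : x ∈ Δm \ Δp) :
    ∃ S : Finset (Fin n → ℤ),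
      connectedComponentIn (Δm \ Δp) x ∪ Δp = convexHull ℝ (intVec '' ↑S) :=
  union_component_is_lattice_polytope_general Sp Sm Δp Δm hΔp hΔm hsub x
end

section
/- Let F be a contravariant functor from subsets of the finite set I to polyhedra in ℝʳ (each value a finite intersection of closed half-spaces, possibly empty) such that the evaluation subcomplexes C^F_•(m) are exact for every m ∈ ℝʳ, and let v ∈ ℝʳ. Then the contravariant functor F^C defined by F^C(I') := F(I') + ℝ_{≥0}·v (Minkowski sum with the ray spanned by v) has exact evaluation subcomplexes C^{F^C}_•(m) for every m ∈ ℝʳ. -/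
open Pointwise

noncomputable section

variable {I : Type*} [Fintype I] [LinearOrder I]

/-- The basis vector `e_J` of the Koszul complex `⋀^• ℂ^I`, indexed by the subset
`J = {i_0 < ⋯ < i_{p-1}} ⊆ I`.  The total space of the Koszul complex is modelled as
`Finset I → ℂ`, with `⋀^p ℂ^I` the span of the `e_J` with `J.card = p`. -/
def eVec (J : Finset I) : Finset I → ℂ := fun K => if K = J then 1 else 0

/-- The Koszul differential: `d (e_{I'}) = ∑_j (-1)^j e_{I' \ {i_j}}` for
`I' = {i_0 < ⋯ < i_p}`. -/
def koszulD : (Finset I → ℂ) →ₗ[ℂ] (Finset I → ℂ) where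
  toFun f := fun J => ∑ i ∈ Jᶜ, (-1 : ℂ) ^ (J.filter (· < i)).card * f (insert i J)
  map_add' f g := by
    funext J
    simp [mul_add, Finset.sum_add_distrib]
  map_smul' c f := by
    funext J
    simp only [Pi.smul_apply, smul_eq_mul, RingHom.id_apply, Finset.mul_sum]
    exact Finset.sum_congr rfl fun i _ => by ring

/-- The degree-`p` part of the evaluation subcomplex `C^F_•(m)`:
the span of the `e_{I'}` with `#I' = p` and `m ∈ F(I')`. -/
def evalC {α : Type*} (F : Finset I → Set α) (m : α) (p : ℕ) :
    Submodule ℂ (Finset I → ℂ) :=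
  Submodule.span ℂ {v | ∃ J : Finset I, J.card = p ∧ m ∈ F J ∧ v = eVec J}

/-- Exactness of the evaluation subcomplex `C^F_•(m)`: its homology vanishes in every
degree `p ≥ 0`. -/
def evalExact {α : Type*} (F : Finset I → Set α) (m : α) : Prop :=
  ∀ p : ℕ, ∀ x ∈ evalC F m p, koszulD x = 0 →
    ∃ y ∈ evalC F m (p + 1), koszulD y = x

/-- A polyhedron in `ℝʳ`: a finite intersection of closed half-spaces
`{x : ⟨x, v⟩ ≥ c}` (in particular `ℝʳ` and `∅` are polyhedra). -/
def IsPolyhedron {r : ℕ} (A : Set (Fin r → ℝ)) : Prop :=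
  ∃ H : Finset ((Fin r → ℝ) × ℝ), A = {x | ∀ h ∈ H, h.2 ≤ ∑ k, x k * h.1 k}

/-- The ray `ℝ_{≥0} · v` spanned by a vector `v`. -/
def rayOf {r : ℕ} (v : Fin r → ℝ) : Set (Fin r → ℝ) :=
  {y | ∃ t : ℝ, 0 ≤ t ∧ y = t • v}


lemma mem_evalC_iff {α : Type*} (F : Finset I → Set α) (m : α) (p : ℕ) (x : Finset I → ℂ) :
    x ∈ evalC F m p ↔ ∀ J, x J ≠ 0 → J.card = p ∧ m ∈ F J := by
  constructor
  · intro hx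
    refine Submodule.span_induction (p := fun x _ => ∀ J, x J ≠ 0 → J.card = p ∧ m ∈ F J)
      ?_ ?_ ?_ ?_ hx
    · rintro w ⟨J, hJ, hm, rfl⟩ K hK
      have : K = J := by
        by_contra h
        simp [eVec, h] at hK
      subst this; exact ⟨hJ, hm⟩
    · intro J h; simp at h
    · intro f g _ _ hf hg J h
      by_cases h1 : f J = 0
      · by_cases h2 : g J = 0
        · simp [h1, h2] at h
        · exact hg J h2
      · exact hf J h1
    · intro c f _ hf J h
      apply hf J
      intro h0
      simp [h0] at h
  · intro hx
    have hx2 : x = ∑ J : Finset I, x J • eVec J := by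
      funext K
      simp [eVec]
    rw [hx2]
    apply Submodule.sum_mem
    intro J _
    by_cases h : x J = 0
    · simp [h]
    · exact Submodule.smul_mem _ _ (Submodule.subset_span ⟨J, (hx J h).1, (hx J h).2, rfl⟩)

lemma koszulD_apply (f : Finset I → ℂ) (J : Finset I) :
    koszulD f J = ∑ i ∈ Jᶜ, (-1 : ℂ) ^ (J.filter (· < i)).card * f (insert i J) := rfl

lemma filter_insert_card (J : Finset I) {i i' : I} (hi : i ∉ J) :
    ((insert i J).filter (· < i')).card
      = (J.filter (· < i')).card + (if i < i' then 1 else 0) := by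
  rw [Finset.filter_insert]
  by_cases h : i < i'
  · simp only [h, if_pos]
    rw [Finset.card_insert_of_notMem (fun hmem => hi (Finset.mem_of_mem_filter _ hmem))]
  · simp [h]

lemma koszulD_koszulD (f : Finset I → ℂ) : koszulD (koszulD f) = 0 := by
  funext J
  show (∑ i ∈ Jᶜ, (-1 : ℂ) ^ (J.filter (· < i)).card * koszulD f (insert i J)) = 0
  simp only [koszulD_apply, Finset.compl_insert, Finset.mul_sum]
  rw [Finset.sum_sigma']
  refine Finset.sum_involution (fun a _ => ⟨a.2, a.1⟩) ?_ ?_ ?_ ?_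
  · rintro ⟨i, i'⟩ ha
    simp only [Finset.mem_sigma, Finset.mem_erase] at ha
    obtain ⟨hi, hne, hi'⟩ := ha
    have hiJ : i ∉ J := Finset.mem_compl.mp hi
    have hi'J : i' ∉ J := Finset.mem_compl.mp hi'
    have harg : insert i' (insert i J) = insert i (insert i' J) := Finset.insert_comm _ _ _
    rw [harg, filter_insert_card J hiJ, filter_insert_card J hi'J]
    rcases lt_or_gt_of_ne hne with h | h
    · have h2 : ¬ (i < i') := not_lt_of_gt h
      simp only [h, h2, if_pos, if_neg, if_true, if_false]
      ring
    · have h2 : ¬ (i' < i) := not_lt_of_gt h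
      simp only [h, h2, if_pos, if_neg, if_true, if_false]
      ring
  · rintro ⟨i, i'⟩ ha _
    simp only [Finset.mem_sigma, Finset.mem_erase] at ha
    intro h
    injection h with h1 h2
    exact ha.2.1 (by simpa using h1)
  · rintro ⟨i, i'⟩ ha
    simp only [Finset.mem_sigma, Finset.mem_erase] at ha ⊢
    exact ⟨ha.2.2, fun h => ha.2.1 h.symm, ha.1⟩
  · rintro ⟨i, i'⟩ _
    rfl

/-- Downward closed family. -/
def famDC (Δ : Set (Finset I)) : Prop := ∀ ⦃J K : Finset I⦄, J ⊆ K → K ∈ Δ → J ∈ Δ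

/-- Exactness for a family of subsets. -/
def famEx (Δ : Set (Finset I)) : Prop :=
  ∀ p : ℕ, ∀ x : Finset I → ℂ, (∀ J, x J ≠ 0 → J.card = p ∧ J ∈ Δ) → koszulD x = 0 →
    ∃ y : Finset I → ℂ, (∀ J, y J ≠ 0 → J.card = p + 1 ∧ J ∈ Δ) ∧ koszulD y = x

lemma evalExact_iff_famEx {α : Type*} (F : Finset I → Set α) (m : α) :
    evalExact F m ↔ famEx {J | m ∈ F J} := by
  constructor
  · intro h p x hx hdx
    obtain ⟨y, hy, hdy⟩ := h p x ((mem_evalC_iff F m p x).mpr fun J hJ => (hx J hJ)) hdx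
    exact ⟨y, fun J hJ => (mem_evalC_iff F m (p+1) y).mp hy J hJ, hdy⟩
  · intro h p x hx hdx
    obtain ⟨y, hy, hdy⟩ := h p x (fun J hJ => (mem_evalC_iff F m p x).mp hx J hJ) hdx
    exact ⟨y, (mem_evalC_iff F m (p+1) y).mpr hy, hdy⟩

lemma koszulD_card_zero {x : Finset I → ℂ} (hx : ∀ J, x J ≠ 0 → J.card = 0) :
    koszulD x = 0 := by
  funext J
  rw [koszulD_apply]
  refine Finset.sum_eq_zero fun i hi => ?_
  have : x (insert i J) = 0 := by
    by_contra h
    have := hx _ h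
    simp [Finset.card_insert_of_notMem (Finset.mem_compl.mp hi)] at this
  simp [this]

lemma koszulD_support {Δ : Set (Finset I)} (hΔ : famDC Δ) {p : ℕ} {x : Finset I → ℂ}
    (hx : ∀ J, x J ≠ 0 → J.card = p + 1 ∧ J ∈ Δ) :
    ∀ J, koszulD x J ≠ 0 → J.card = p ∧ J ∈ Δ := by
  intro J hJ
  rw [koszulD_apply] at hJ
  obtain ⟨i, hi, hne⟩ := Finset.exists_ne_zero_of_sum_ne_zero hJ
  have hxi : x (insert i J) ≠ 0 := fun h => hne (by simp [h])
  obtain ⟨hcard, hmem⟩ := hx _ hxi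
  have hiJ : i ∉ J := Finset.mem_compl.mp hi
  rw [Finset.card_insert_of_notMem hiJ] at hcard
  exact ⟨Nat.succ_injective hcard, hΔ (Finset.subset_insert i J) hmem⟩

lemma famEx_empty : famEx (∅ : Set (Finset I)) := by
  intro p x hx hdx
  have hx0 : x = 0 := by
    funext J
    by_contra h
    exact (hx J h).2
  exact ⟨0, fun J hJ => absurd rfl hJ, by rw [map_zero, hx0]⟩

lemma famEx_union {Δ₁ Δ₂ : Set (Finset I)} (h1 : famDC Δ₁) (h2 : famDC Δ₂)
    (e1 : famEx Δ₁) (e2 : famEx Δ₂) (e12 : famEx (Δ₁ ∩ Δ₂)) : famEx (Δ₁ ∪ Δ₂) := by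
  classical
  intro p x hx hdx
  set x₁ : Finset I → ℂ := fun J => if J ∈ Δ₁ then x J else 0 with hx₁def
  set x₂ : Finset I → ℂ := x - x₁ with hx₂def
  have hx1 : ∀ J, x₁ J ≠ 0 → J.card = p ∧ J ∈ Δ₁ := by
    intro J hJ
    by_cases h : J ∈ Δ₁
    · refine ⟨(hx J ?_).1, h⟩
      simpa [hx₁def, h] using hJ
    · simp [hx₁def, h] at hJ
  have hx2 : ∀ J, x₂ J ≠ 0 → J.card = p ∧ J ∈ Δ₂ := by
    intro J hJ
    by_cases h : J ∈ Δ₁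
    · simp [hx₂def, hx₁def, h] at hJ
    · have hxJ : x J ≠ 0 := by
        intro h0; apply hJ; simp [hx₂def, hx₁def, h0]
      obtain ⟨hc, hm⟩ := hx J hxJ
      exact ⟨hc, hm.resolve_left h⟩
  have hsum : x₁ + x₂ = x := by simp [hx₂def]
  have hd12 : koszulD x₁ + koszulD x₂ = 0 := by
    rw [← map_add, hsum, hdx]
  have hd1eq : koszulD x₂ = - koszulD x₁ := by
    rw [eq_neg_iff_add_eq_zero, add_comm]; exact hd12
  -- find z in the intersection with d z = d x₁
  obtain ⟨z, hz, hdz⟩ : ∃ z : Finset I → ℂ,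
      (∀ J, z J ≠ 0 → J.card = p ∧ J ∈ Δ₁ ∩ Δ₂) ∧ koszulD z = koszulD x₁ := by
    cases p with
    | zero =>
      refine ⟨0, fun J hJ => absurd rfl hJ, ?_⟩
      rw [map_zero, koszulD_card_zero fun J hJ => (hx1 J hJ).1]
    | succ q =>
      have hs1 := koszulD_support h1 hx1
      have hs2 : ∀ J, koszulD x₁ J ≠ 0 → J.card = q ∧ J ∈ Δ₂ := by
        intro J hJ
        have : koszulD x₂ J ≠ 0 := by
          rw [hd1eq]; simpa using hJ
        exact koszulD_support h2 hx2 J this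
      exact e12 q (koszulD x₁) (fun J hJ => ⟨(hs1 J hJ).1, (hs1 J hJ).2, (hs2 J hJ).2⟩)
        (koszulD_koszulD x₁)
  obtain ⟨y₁, hy₁, hdy₁⟩ := e1 p (x₁ - z)
    (by
      intro J hJ
      by_cases h : x₁ J = 0
      · have hzJ : z J ≠ 0 := by intro h0; apply hJ; simp [h, h0]
        exact ⟨(hz J hzJ).1, (hz J hzJ).2.1⟩
      · exact hx1 J h)
    (by rw [map_sub, hdz, sub_self])
  obtain ⟨y₂, hy₂, hdy₂⟩ := e2 p (x₂ + z)
    (by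
      intro J hJ
      by_cases h : x₂ J = 0
      · have hzJ : z J ≠ 0 := by intro h0; apply hJ; simp [h, h0]
        exact ⟨(hz J hzJ).1, (hz J hzJ).2.2⟩
      · exact hx2 J h)
    (by rw [map_add, hdz, hd1eq, neg_add_cancel])
  refine ⟨y₁ + y₂, ?_, ?_⟩
  · intro J hJ
    by_cases h : y₁ J = 0
    · have : y₂ J ≠ 0 := by intro h0; apply hJ; simp [h, h0]
      exact ⟨(hy₂ J this).1, Or.inr (hy₂ J this).2⟩
    · exact ⟨(hy₁ J h).1, Or.inl (hy₁ J h).2⟩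
  · rw [map_add, hdy₁, hdy₂]
    abel_nf
    simpa using congrArg (fun f => f) hsum

lemma polyhedron_closed {r : ℕ} {A : Set (Fin r → ℝ)} (h : IsPolyhedron A) : IsClosed A := by
  obtain ⟨H, rfl⟩ := h
  have : {x : Fin r → ℝ | ∀ h ∈ H, h.2 ≤ ∑ k, x k * h.1 k}
      = ⋂ h ∈ H, {x : Fin r → ℝ | h.2 ≤ ∑ k, x k * h.1 k} := by
    ext x; simp
  rw [this]
  refine isClosed_biInter fun h _ => isClosed_le continuous_const ?_
  exact continuous_finset_sum _ fun k _ => (continuous_apply k).mul continuous_const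

lemma polyhedron_convex {r : ℕ} {A : Set (Fin r → ℝ)} (h : IsPolyhedron A) : Convex ℝ A := by
  obtain ⟨H, rfl⟩ := h
  intro x hx y hy a b ha hb hab
  intro h hh
  have hx' := hx h hh
  have hy' := hy h hh
  have hsum : ∑ k, (a • x + b • y) k * h.1 k
      = a * ∑ k, x k * h.1 k + b * ∑ k, y k * h.1 k := by
    rw [Finset.mul_sum, Finset.mul_sum, ← Finset.sum_add_distrib]
    refine Finset.sum_congr rfl fun k _ => ?_
    simp only [Pi.add_apply, Pi.smul_apply, smul_eq_mul]
    ring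
  rw [hsum]
  calc h.2 = a * h.2 + b * h.2 := by rw [← add_mul, hab, one_mul]
    _ ≤ a * ∑ k, x k * h.1 k + b * ∑ k, y k * h.1 k :=
        add_le_add (mul_le_mul_of_nonneg_left hx' ha) (mul_le_mul_of_nonneg_left hy' hb)

/-- Step 2, adding a single ray, of the proof of Proposition 7 of the
paper.  Let `F` be a contravariant functor from subsets of the finite set `I` to
polyhedra in `ℝʳ` whose evaluation subcomplexes `C^F_•(m)` are exact for every `m ∈ ℝʳ`,
and let `v ∈ ℝʳ`.  Then the functor `F^C(I') := F(I') + ℝ_{≥0}·v` (Minkowski sum with the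
ray spanned by `v`) has exact evaluation subcomplexes for every `m ∈ ℝʳ`. -/
theorem evalExact_add_ray {r : ℕ} (F : Finset I → Set (Fin r → ℝ))
    (hContra : ∀ A B : Finset I, A ⊆ B → F B ⊆ F A)
    (hPoly : ∀ J : Finset I, IsPolyhedron (F J))
    (hExact : ∀ m : Fin r → ℝ, evalExact F m)
    (v : Fin r → ℝ) :
    ∀ m : Fin r → ℝ, evalExact (fun J => F J + rayOf v) m := by
  classical
  intro m
  rw [evalExact_iff_famEx]
  set T : Finset I → Set ℝ := fun J => {t : ℝ | 0 ≤ t ∧ m - t • v ∈ F J} with hTdef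
  set D : ℝ → Set (Finset I) := fun t => {J : Finset I | t ∈ T J} with hDdef
  have hgoalset : {J : Finset I | m ∈ (fun J => F J + rayOf v) J}
      = {J : Finset I | (T J).Nonempty} := by
    ext J
    simp only [Set.mem_setOf_eq, Set.mem_add, rayOf, Set.Nonempty, hTdef]
    constructor
    · rintro ⟨x, hx, y, ⟨t, ht, rfl⟩, hxy⟩
      refine ⟨t, ht, ?_⟩
      have hxe : m - t • v = x := by rw [← hxy]; abel
      rw [hxe]; exact hx
    · rintro ⟨t, ht, hm⟩
      exact ⟨m - t • v, hm, t • v, ⟨t, ht, rfl⟩, by abel⟩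
  rw [hgoalset]
  have hFclosed : ∀ J, IsClosed (F J) := fun J => polyhedron_closed (hPoly J)
  have hFconvex : ∀ J, Convex ℝ (F J) := fun J => polyhedron_convex (hPoly J)
  have hTclosed : ∀ J, IsClosed (T J) := by
    intro J
    have hTeq : T J = Set.Ici (0:ℝ) ∩ ((fun t : ℝ => m - t • v) ⁻¹' F J) := by
      ext t; simp [hTdef, Set.mem_Ici]
    rw [hTeq]
    exact isClosed_Ici.inter ((hFclosed J).preimage
      (continuous_const.sub (continuous_id.smul continuous_const)))
  have hOrd : ∀ J, ∀ {t₁ t₂ u : ℝ}, t₁ ∈ T J → t₂ ∈ T J → t₁ ≤ u → u ≤ t₂ → u ∈ T J := by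
    intro J t₁ t₂ u h1 h2 hu1 hu2
    have hconv : Convex ℝ (T J) := by
      intro a ha b hb s1 s2 hs1 hs2 hs12
      constructor
      · simp only [smul_eq_mul]
        exact add_nonneg (mul_nonneg hs1 ha.1) (mul_nonneg hs2 hb.1)
      · have h3 := hFconvex J ha.2 hb.2 hs1 hs2 hs12
        have heq : m - (s1 • a + s2 • b) • v = s1 • (m - a • v) + s2 • (m - b • v) := by
          funext k
          simp only [Pi.sub_apply, Pi.add_apply, Pi.smul_apply, smul_eq_mul]
          linear_combination (-(m k)) * hs12
        rw [heq]; exact h3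
    exact hconv.ordConnected.out h1 h2 ⟨hu1, hu2⟩
  have hbdd : ∀ J, BddBelow (T J) := fun J => ⟨0, fun t ht => ht.1⟩
  set B : Finset ℝ := insert 0 ((Finset.univ.image fun J : Finset I => sInf (T J))
      ∪ (Finset.univ.image fun J : Finset I => sSup (T J))) with hBdef
  have hInfB : ∀ J : Finset I, sInf (T J) ∈ B := by
    intro J
    simp only [hBdef, Finset.mem_insert, Finset.mem_union, Finset.mem_image]
    exact Or.inr (Or.inl ⟨J, Finset.mem_univ J, rfl⟩)
  have hSupB : ∀ J : Finset I, sSup (T J) ∈ B := by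
    intro J
    simp only [hBdef, Finset.mem_insert, Finset.mem_union, Finset.mem_image]
    exact Or.inr (Or.inr ⟨J, Finset.mem_univ J, rfl⟩)
  have hInfmem : ∀ J, (T J).Nonempty → sInf (T J) ∈ T J :=
    fun J h => (hTclosed J).csInf_mem h (hbdd J)
  have hSupmem : ∀ J, (T J).Nonempty → BddAbove (T J) → sSup (T J) ∈ T J :=
    fun J h hB => (hTclosed J).csSup_mem h hB
  have hD_DC : ∀ t, famDC (D t) := by
    intro t J K hJK hK
    exact ⟨hK.1, hContra J K hJK hK.2⟩
  have hD_Ex : ∀ t, famEx (D t) := by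
    intro t
    rcases le_or_gt 0 t with ht | ht
    · have hDeq : D t = {J : Finset I | m - t • v ∈ F J} := by
        ext J; simp [hDdef, hTdef, ht]
      rw [hDeq]
      exact (evalExact_iff_famEx F (m - t • v)).mp (hExact (m - t • v))
    · have hDeq : D t = (∅ : Set (Finset I)) := by
        ext J; simp [hDdef, hTdef, not_le.mpr ht]
      rw [hDeq]; exact famEx_empty
  have hkey : ∀ b₁ b₂ : ℝ, b₁ < b₂ → (∀ c ∈ B, c ≤ b₁ ∨ b₂ ≤ c) →
      D b₁ ∩ D b₂ = D ((b₁ + b₂) / 2) := by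
    intro b₁ b₂ hlt hcons
    have hs1 : b₁ ≤ (b₁ + b₂)/2 := by linarith
    have hs2 : (b₁ + b₂)/2 ≤ b₂ := by linarith
    have hs2' : (b₁ + b₂)/2 < b₂ := by linarith
    have hs1' : b₁ < (b₁ + b₂)/2 := by linarith
    ext J
    constructor
    · rintro ⟨h1, h2⟩
      exact hOrd J h1 h2 hs1 hs2
    · intro hs
      have hne : (T J).Nonempty := ⟨_, hs⟩
      have ha := hInfmem J hne
      have hale : sInf (T J) ≤ (b₁+b₂)/2 := csInf_le (hbdd J) hs
      have hab1 : sInf (T J) ≤ b₁ := by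
        rcases hcons _ (hInfB J) with h | h
        · exact h
        · linarith
      have hb1T : b₁ ∈ T J := hOrd J ha hs hab1 hs1
      have hb2T : b₂ ∈ T J := by
        by_cases hBdd : BddAbove (T J)
        · have hbmem := hSupmem J hne hBdd
          have hble : (b₁+b₂)/2 ≤ sSup (T J) := le_csSup hBdd hs
          have hb2le : b₂ ≤ sSup (T J) := by
            rcases hcons _ (hSupB J) with h | h
            · exfalso; linarith
            · exact h
          exact hOrd J hs hbmem hs2 hb2le
        · obtain ⟨w, hw, hww⟩ := (not_bddAbove_iff.mp hBdd) b₂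
          exact hOrd J hs hw hs2 hww.le
      exact ⟨hb1T, hb2T⟩
  have hmain : ∀ n : ℕ, ∀ S : Finset ℝ, S.card ≤ n → S ⊆ B →
      (∀ c ∈ B, ∀ b ∈ S, c ≤ b → c ∈ S) → famEx {J : Finset I | ∃ t ∈ S, J ∈ D t} := by
    intro n
    induction n with
    | zero =>
      intro S hcard _ _
      have hS : S = ∅ := Finset.card_eq_zero.mp (Nat.le_zero.mp hcard)
      subst hS
      have hempty : {J : Finset I | ∃ t ∈ (∅ : Finset ℝ), J ∈ D t} = ∅ := by ext J; simp
      rw [hempty]; exact famEx_empty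
    | succ n ih =>
      intro S hcard hSB hinit
      rcases S.eq_empty_or_nonempty with rfl | hne
      · have hempty : {J : Finset I | ∃ t ∈ (∅ : Finset ℝ), J ∈ D t} = ∅ := by ext J; simp
        rw [hempty]; exact famEx_empty
      · set b := S.max' hne with hbdef
        have hbS : b ∈ S := S.max'_mem hne
        set S' := S.erase b with hS'def
        have hS'B : S' ⊆ B := (Finset.erase_subset _ _).trans hSB
        have hS'init : ∀ c ∈ B, ∀ b'' ∈ S', c ≤ b'' → c ∈ S' := by
          intro c hc b'' hb'' hle
          have hb''S : b'' ∈ S := Finset.mem_of_mem_erase hb''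
          have hb''lt : b'' < b :=
            lt_of_le_of_ne (S.le_max' _ hb''S) (Finset.ne_of_mem_erase hb'')
          exact Finset.mem_erase.mpr ⟨ne_of_lt (lt_of_le_of_lt hle hb''lt),
            hinit c hc b hbS (by linarith)⟩
        have hS'card : S'.card ≤ n := by
          have h2 := Finset.card_pos.mpr hne
          rw [hS'def, Finset.card_erase_of_mem hbS]
          omega
        have hsplit : {J : Finset I | ∃ t ∈ S, J ∈ D t}
            = {J : Finset I | ∃ t ∈ S', J ∈ D t} ∪ D b := by
          ext J
          simp only [Set.mem_union, Set.mem_setOf_eq]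
          constructor
          · rintro ⟨t, ht, hJ⟩
            by_cases h : t = b
            · exact Or.inr (h ▸ hJ)
            · exact Or.inl ⟨t, Finset.mem_erase.mpr ⟨h, ht⟩, hJ⟩
          · rintro (⟨t, ht, hJ⟩ | hJ)
            · exact ⟨t, Finset.mem_of_mem_erase ht, hJ⟩
            · exact ⟨b, hbS, hJ⟩
        rw [hsplit]
        rcases S'.eq_empty_or_nonempty with h' | hne'
        · have hempty : {J : Finset I | ∃ t ∈ S', J ∈ D t} = ∅ := by ext J; simp [h']
          rw [hempty, Set.empty_union]
          exact hD_Ex b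
        · set b' := S'.max' hne' with hb'def
          have hb'S' : b' ∈ S' := S'.max'_mem hne'
          have hb'lt : b' < b :=
            lt_of_le_of_ne (S.le_max' _ (Finset.mem_of_mem_erase hb'S'))
              (Finset.ne_of_mem_erase hb'S')
          have hcons : ∀ c ∈ B, c ≤ b' ∨ b ≤ c := by
            intro c hc
            by_contra hcon
            push_neg at hcon
            obtain ⟨hc1, hc2⟩ := hcon
            have hcS : c ∈ S := hinit c hc b hbS hc2.le
            have hcS' : c ∈ S' := Finset.mem_erase.mpr ⟨ne_of_lt hc2, hcS⟩
            exact absurd (S'.le_max' c hcS') (not_le.mpr hc1)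
          have hUDC : famDC {J : Finset I | ∃ t ∈ S', J ∈ D t} := by
            rintro J K hJK ⟨t, ht, hK⟩
            exact ⟨t, ht, hD_DC t hJK hK⟩
          have hinter : {J : Finset I | ∃ t ∈ S', J ∈ D t} ∩ D b = D ((b' + b)/2) := by
            rw [← hkey b' b hb'lt hcons]
            ext J
            constructor
            · rintro ⟨⟨t, ht, hJt⟩, hJb⟩
              have htb' : t ≤ b' := S'.le_max' t ht
              exact ⟨hOrd J hJt hJb htb' hb'lt.le, hJb⟩
            · rintro ⟨hJb', hJb⟩
              exact ⟨⟨b', hb'S', hJb'⟩, hJb⟩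
          refine famEx_union hUDC (hD_DC b) (ih S' hS'card hS'B hS'init) (hD_Ex b) ?_
          rw [hinter]
          exact hD_Ex _
  have hfinal : {J : Finset I | (T J).Nonempty} = {J : Finset I | ∃ t ∈ B, J ∈ D t} := by
    ext J
    constructor
    · intro hne
      exact ⟨sInf (T J), hInfB J, hInfmem J hne⟩
    · rintro ⟨t, _, hJ⟩
      exact ⟨t, hJ⟩
  rw [hfinal]
  exact hmain B.card B le_rfl subset_rfl (fun c hc _ _ _ => hc)

end
end
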